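/- Let 0 < a < 1 and let R_a be De Rham's function. For a dyadic rational x = Σ_{k=1}^n d_k 2^{−k} with digits d_k ∈ {0,1}, one has R_a(x) = (a/(1−a))·Σ_{k=1}^n d_k·a^{k−s_k}·(1−a)^{s_k}, where s_k = Σ_{j=1}^k d_j. -/

import Mathlib

open Real Filter Set Finset

/-- De Rham's function with parameter `a`: the unique continuous function on
`[0,1]` with `R 0 = 0`, `R 1 = 1` satisfying the two functional equations. -/
def IsDeRham (a : ℝ) (R : ℝ → ℝ) : Prop :=
  ContinuousOn R (Set.Icc (0:ℝ) 1) ∧ R 0 = 0 ∧ R 1 = 1 ∧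
  (∀ x : ℝ, 0 ≤ x → x < 1/2 → R x = a * R (2*x)) ∧
  (∀ x : ℝ, 1/2 ≤ x → x ≤ 1 → R x = (1 - a) * R (2*x - 1) + a)

lemma sum_half_pow (n : ℕ) : ∑ k ∈ Finset.range n, ((1:ℝ)/2)^(k+1) = 1 - (1/2)^n := by
  induction n with
  | zero => simp
  | succ n ih => rw [Finset.sum_range_succ, ih]; ring

lemma digits_sum_le (d : ℕ → ℕ) (hd : ∀ k, d k ≤ 1) (m : ℕ) :
    ∑ j ∈ Finset.range m, d j ≤ m := by
  calc ∑ j ∈ Finset.range m, d j ≤ ∑ j ∈ Finset.range m, 1 :=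
        Finset.sum_le_sum (fun i _ => hd i)
  _ = m := by simp

lemma icc_range {M : Type*} [AddCommMonoid M] (f : ℕ → M) (m : ℕ) :
    ∑ k ∈ Finset.Icc 1 m, f k = ∑ k ∈ Finset.range m, f (k+1) := by
  induction m with
  | zero => simp
  | succ m ih => rw [Finset.sum_Icc_succ_top (by omega), ih, Finset.sum_range_succ]

lemma aux_rham (a : ℝ) (ha0 : 0 < a) (ha1 : a < 1) (R : ℝ → ℝ) (hR : IsDeRham a R) :
    ∀ n (d : ℕ → ℕ), (∀ k, d k ≤ 1) →
    R (∑ k ∈ Finset.range n, (d k : ℝ) * (1/2)^(k+1)) =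
      (a / (1 - a)) * ∑ k ∈ Finset.range n, (d k : ℝ) *
        a ^ ((k+1) - ∑ j ∈ Finset.range (k+1), d j) *
        (1 - a) ^ (∑ j ∈ Finset.range (k+1), d j) := by
  intro n
  induction n with
  | zero => intro d hd; simpa using hR.2.1
  | succ n ih =>
    intro d hd
    obtain ⟨hcont, h0, h1, hlow, hhigh⟩ := hR
    have ha1' : (1:ℝ) - a ≠ 0 := by linarith
    set y := ∑ k ∈ Finset.range n, ((d (k+1) : ℝ)) * (1/2)^(k+1) with hy
    have hy0 : 0 ≤ y := by
      apply Finset.sum_nonneg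
      intro i _
      positivity
    have hy1 : y ≤ 1 - (1/2)^n := by
      rw [hy, ← sum_half_pow n]
      apply Finset.sum_le_sum
      intro i _
      have := hd (i+1)
      have h1 : (d (i+1) : ℝ) ≤ 1 := by exact_mod_cast this
      nlinarith [pow_pos (by norm_num : (0:ℝ) < 1/2) (i+1)]
    have hx : ∑ k ∈ Finset.range (n+1), (d k : ℝ) * (1/2)^(k+1)
        = y/2 + (d 0 : ℝ)/2 := by
      rw [Finset.sum_range_succ', hy, Finset.sum_div]
      congr 1
      · apply Finset.sum_congr rfl
        intro i _
        ring
      · ring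
    have hIH := ih (fun k => d (k+1)) (fun k => hd (k+1))
    set T := ∑ k ∈ Finset.range n, ((d (k+1) : ℝ)) *
        a ^ ((k+1) - ∑ j ∈ Finset.range (k+1), d (j+1)) *
        (1 - a) ^ (∑ j ∈ Finset.range (k+1), d (j+1)) with hT
    -- rewrite the RHS sum by peeling the first digit
    have hsplit : ∀ i : ℕ, ∑ j ∈ Finset.range (i+1+1), d j
        = (∑ j ∈ Finset.range (i+1), d (j+1)) + d 0 := by
      intro i; rw [Finset.sum_range_succ']
    have hd0 := hd 0
    interval_cases h : d 0
    · -- d 0 = 0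
      have hxlt : y/2 + (0:ℝ)/2 < 1/2 := by
        have : (0:ℝ) < (1/2)^n := by positivity
        linarith
      have hxge : (0:ℝ) ≤ y/2 + (0:ℝ)/2 := by linarith
      rw [hx]
      push_cast
      rw [hlow _ hxge (by simpa using hxlt)]
      have h2x : 2 * ((y:ℝ)/2 + 0/2) = y := by ring
      rw [h2x, hIH]
      rw [Finset.sum_range_succ']
      have hterm : ∀ i ∈ Finset.range n, ((d (i+1) : ℝ)) *
          a ^ ((i+1+1) - ∑ j ∈ Finset.range (i+1+1), d j) *
          (1 - a) ^ (∑ j ∈ Finset.range (i+1+1), d j)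
          = a * (((d (i+1) : ℝ)) *
            a ^ ((i+1) - ∑ j ∈ Finset.range (i+1), d (j+1)) *
            (1 - a) ^ (∑ j ∈ Finset.range (i+1), d (j+1))) := by
        intro i _
        have hle : ∑ j ∈ Finset.range (i+1), d (j+1) ≤ i+1 :=
          digits_sum_le (fun k => d (k+1)) (fun k => hd (k+1)) (i+1)
        rw [hsplit i]
        rw [show (∑ j ∈ Finset.range (i+1), d (j+1)) + 0
            = ∑ j ∈ Finset.range (i+1), d (j+1) from rfl]
        rw [show (i+1+1) - ∑ j ∈ Finset.range (i+1), d (j+1)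
            = ((i+1) - ∑ j ∈ Finset.range (i+1), d (j+1)) + 1 from by omega]
        rw [pow_succ]
        ring
      rw [Finset.sum_congr rfl hterm]
      simp only [h, Nat.cast_zero, zero_mul, add_zero]
      rw [← Finset.mul_sum, ← hT]
      ring
    · -- d 0 = 1
      have hxge : (1:ℝ)/2 ≤ y/2 + (1:ℝ)/2 := by linarith
      have hxle : y/2 + (1:ℝ)/2 ≤ 1 := by
        have : (0:ℝ) < (1/2)^n := by positivity
        linarith
      rw [hx]
      push_cast
      rw [hhigh _ hxge hxle]
      have h2x : 2 * ((y:ℝ)/2 + 1/2) - 1 = y := by ring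
      rw [h2x, hIH]
      rw [Finset.sum_range_succ']
      have hterm : ∀ i ∈ Finset.range n, ((d (i+1) : ℝ)) *
          a ^ ((i+1+1) - ∑ j ∈ Finset.range (i+1+1), d j) *
          (1 - a) ^ (∑ j ∈ Finset.range (i+1+1), d j)
          = (1 - a) * (((d (i+1) : ℝ)) *
            a ^ ((i+1) - ∑ j ∈ Finset.range (i+1), d (j+1)) *
            (1 - a) ^ (∑ j ∈ Finset.range (i+1), d (j+1))) := by
        intro i _
        rw [hsplit i]
        rw [show (i+1+1) - ((∑ j ∈ Finset.range (i+1), d (j+1)) + 1)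
            = (i+1) - ∑ j ∈ Finset.range (i+1), d (j+1) from by omega]
        rw [pow_succ]
        ring
      rw [Finset.sum_congr rfl hterm]
      have hf0 : ((d 0 : ℝ)) * a ^ ((0+1) - ∑ j ∈ Finset.range (0+1), d j) *
          (1 - a) ^ (∑ j ∈ Finset.range (0+1), d j) = 1 - a := by
        simp [h]
      rw [hf0, ← Finset.mul_sum, ← hT]
      field_simp

/-- the Lomnicki–Ulam arithmetic representation of De Rham's
function at a dyadic rational `x = Σ_{k=1}^n d_k 2^{-k}` with binary digits
`d_k ∈ {0,1}` and partial digit sums `s_k = Σ_{j=1}^k d_j`: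
`R_a x = (a/(1-a)) · Σ_{k=1}^n d_k · a^(k - s_k) · (1-a)^(s_k)`. -/
theorem stmt7 (a : ℝ) (ha0 : 0 < a) (ha1 : a < 1) (R : ℝ → ℝ)
    (hR : IsDeRham a R) (n : ℕ) (d : ℕ → ℕ) (hd : ∀ k, d k ≤ 1)
    (x : ℝ) (hx : x = ∑ k ∈ Finset.Icc 1 n, (d k : ℝ) * (1/2) ^ k) :
    R x = (a / (1 - a)) *
      ∑ k ∈ Finset.Icc 1 n, (d k : ℝ) *
        a ^ (k - (∑ j ∈ Finset.Icc 1 k, d j)) *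
        (1 - a) ^ (∑ j ∈ Finset.Icc 1 k, d j) := by
  have key := aux_rham a ha0 ha1 R hR n (fun k => d (k+1)) (fun k => hd (k+1))
  rw [hx, icc_range]
  rw [icc_range (fun k => (d k : ℝ) * a ^ (k - (∑ j ∈ Finset.Icc 1 k, d j)) *
        (1 - a) ^ (∑ j ∈ Finset.Icc 1 k, d j)) n]
  simp only [icc_range]
  exact key
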